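/- With Σ(π,s) = ∫₀^π σ_q(p) b_q(p,s) dp and σ_q, b_q continuous, if σ_q(p) > 0 for all p ∈ (0,S] and for each π > 0 the functions s ↦ b_q(p,s), p ≤ π, span a set whose closed linear span in L²[0,S] equals all of L²[0,S], then the market price of risk equation ∫₀^S Σ(π,s)λ(s)ds = b(π) for all π admits at most one solution λ ∈ L²[0,S]. -/
import Mathlib

open intervalIntegral MeasureTheory

/-- Uniqueness of the market price of risk: with
Σ(π,s) = ∫₀^π σ_q(p)b_q(p,s)dp, σ_q > 0 on (0,S], and the family
{b_q(p,·) : p ≤ π} total in L²[0,S] for each π > 0 (expressed via triviality of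
its orthogonal complement), the equations ∫₀^S Σ(π,s)λ(s)ds = b(π) for all
π ∈ [0,S] admit at most one solution λ (up to a.e. equality on [0,S]). -/
theorem stmt_18 (S : ℝ) (hS : 0 < S) (σq : ℝ → ℝ) (bq : ℝ → ℝ → ℝ) (b : ℝ → ℝ)
    (hσq : Continuous σq) (hbq : Continuous (fun x : ℝ × ℝ => bq x.1 x.2))
    (hσpos : ∀ p, 0 < p → p ≤ S → 0 < σq p)
    (htotal : ∀ π, 0 < π → π ≤ S → ∀ μ : ℝ → ℝ, Measurable μ →
      IntegrableOn μ (Set.Icc 0 S) →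
      (∀ p, 0 ≤ p → p ≤ π → (∫ s in (0:ℝ)..S, bq p s * μ s) = 0) →
      μ =ᵐ[volume.restrict (Set.Icc (0:ℝ) S)] 0)
    (lam₁ lam₂ : ℝ → ℝ)
    (hm₁ : Measurable lam₁) (hm₂ : Measurable lam₂)
    (hi₁ : IntegrableOn lam₁ (Set.Icc 0 S)) (hi₂ : IntegrableOn lam₂ (Set.Icc 0 S))
    (heq₁ : ∀ π ∈ Set.Icc (0:ℝ) S,
      (∫ s in (0:ℝ)..S, (∫ p in (0:ℝ)..π, σq p * bq p s) * lam₁ s) = b π)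
    (heq₂ : ∀ π ∈ Set.Icc (0:ℝ) S,
      (∫ s in (0:ℝ)..S, (∫ p in (0:ℝ)..π, σq p * bq p s) * lam₂ s) = b π) :
    lam₁ =ᵐ[volume.restrict (Set.Icc (0:ℝ) S)] lam₂ := by
  have hS0 : (0:ℝ) ≤ S := hS.le
  set μ : ℝ → ℝ := fun s => lam₁ s - lam₂ s with hμdef
  have hμmeas : Measurable μ := hm₁.sub hm₂
  have hμIcc : IntegrableOn μ (Set.Icc 0 S) := hi₁.sub hi₂
  have hprod_cont : Continuous (fun x : ℝ × ℝ => σq x.1 * bq x.1 x.2) :=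
    (hσq.comp continuous_fst).mul hbq
  -- a bound for σq * bq on [0,S]²
  obtain ⟨C, hC⟩ := (isCompact_Icc.prod isCompact_Icc :
      IsCompact ((Set.Icc (0:ℝ) S) ×ˢ (Set.Icc (0:ℝ) S))).exists_bound_of_continuousOn
      hprod_cont.continuousOn
  -- product integrability
  have fub : ∀ π, 0 ≤ π → π ≤ S → ∀ lam : ℝ → ℝ, Measurable lam →
      IntegrableOn lam (Set.Icc 0 S) →
      Integrable (fun z : ℝ × ℝ => σq z.1 * bq z.1 z.2 * lam z.2)
        ((volume.restrict (Set.Ioc 0 π)).prod (volume.restrict (Set.Ioc 0 S))) := by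
    intro π hπ0 hπS lam hlm hli
    have hliIoc : IntegrableOn lam (Set.Ioc 0 S) := hli.mono_set Set.Ioc_subset_Icc_self
    haveI : IsFiniteMeasure (volume.restrict (Set.Ioc (0:ℝ) π)) :=
      ⟨by rw [Measure.restrict_apply_univ]; simp [Real.volume_Ioc]⟩
    have hmeas : AEStronglyMeasurable (fun z : ℝ × ℝ => σq z.1 * bq z.1 z.2 * lam z.2)
        (((volume.restrict (Set.Ioc 0 π)).prod (volume.restrict (Set.Ioc 0 S)))) :=
      (hprod_cont.measurable.mul (hlm.comp measurable_snd)).aestronglyMeasurable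
    have hdom : Integrable (fun z : ℝ × ℝ => C * |lam z.2|)
        ((volume.restrict (Set.Ioc 0 π)).prod (volume.restrict (Set.Ioc 0 S))) :=
      (integrable_const C).mul_prod hliIoc.abs
    refine hdom.mono' hmeas ?_
    rw [Measure.prod_restrict]
    refine (ae_restrict_iff' (measurableSet_Ioc.prod measurableSet_Ioc)).2 (ae_of_all _ ?_)
    rintro ⟨p, s⟩ ⟨hp, hs⟩
    have hb : ‖σq p * bq p s‖ ≤ C :=
      hC (p, s) ⟨Set.Ioc_subset_Icc_self.trans (Set.Icc_subset_Icc le_rfl hπS) hp,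
        Set.Ioc_subset_Icc_self hs⟩
    calc ‖σq p * bq p s * lam s‖ = ‖σq p * bq p s‖ * |lam s| := by
          rw [norm_mul, Real.norm_eq_abs (lam s)]
      _ ≤ C * |lam s| := by
          exact mul_le_mul_of_nonneg_right hb (abs_nonneg _)
  -- the swap identity
  have swap : ∀ π, 0 ≤ π → π ≤ S → ∀ lam : ℝ → ℝ, Measurable lam →
      IntegrableOn lam (Set.Icc 0 S) →
      (∫ s in Set.Ioc (0:ℝ) S, (∫ p in Set.Ioc (0:ℝ) π, σq p * bq p s) * lam s)
        = ∫ p in Set.Ioc (0:ℝ) π, σq p * ∫ s in Set.Ioc (0:ℝ) S, bq p s * lam s := by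
    intro π hπ0 hπS lam hlm hli
    have hint := fub π hπ0 hπS lam hlm hli
    have h1 : ∀ s, (∫ p in Set.Ioc (0:ℝ) π, σq p * bq p s) * lam s
        = ∫ p in Set.Ioc (0:ℝ) π, σq p * bq p s * lam s := by
      intro s
      rw [← MeasureTheory.integral_mul_const]
    have h2 : ∀ p, (∫ s in Set.Ioc (0:ℝ) S, σq p * bq p s * lam s)
        = σq p * ∫ s in Set.Ioc (0:ℝ) S, bq p s * lam s := by
      intro p
      rw [← MeasureTheory.integral_const_mul]
      congr 1; ext s; ring
    simp only [h1]
    have h3 : (∫ p in Set.Ioc (0:ℝ) π, σq p * ∫ s in Set.Ioc (0:ℝ) S, bq p s * lam s)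
        = ∫ p in Set.Ioc (0:ℝ) π, ∫ s in Set.Ioc (0:ℝ) S, σq p * bq p s * lam s := by
      simp only [← h2]
    rw [h3]
    exact MeasureTheory.integral_integral_swap
      (f := fun s p => σq p * bq p s * lam s) hint.swap
  -- marginal integrability in s
  have marg : ∀ π, 0 ≤ π → π ≤ S → ∀ lam : ℝ → ℝ, Measurable lam →
      IntegrableOn lam (Set.Icc 0 S) →
      Integrable (fun s => (∫ p in Set.Ioc (0:ℝ) π, σq p * bq p s) * lam s)
        (volume.restrict (Set.Ioc (0:ℝ) S)) := by
    intro π hπ0 hπS lam hlm hli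
    have hint := (fub π hπ0 hπS lam hlm hli).integral_prod_right
    have : (fun s => (∫ p in Set.Ioc (0:ℝ) π, σq p * bq p s) * lam s)
        = fun s => ∫ p in Set.Ioc (0:ℝ) π, σq p * bq p s * lam s := by
      funext s; rw [← MeasureTheory.integral_mul_const]
    rw [this]
    exact hint
  -- G : inner integral against μ
  set G : ℝ → ℝ := fun p => ∫ s in Set.Ioc (0:ℝ) S, bq p s * μ s with hGdef
  -- H(π) = 0 on [0, S]
  have hzero : ∀ π, 0 ≤ π → π ≤ S → (∫ p in Set.Ioc (0:ℝ) π, σq p * G p) = 0 := by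
    intro π hπ0 hπS
    have e1 := heq₁ π ⟨hπ0, hπS⟩
    have e2 := heq₂ π ⟨hπ0, hπS⟩
    rw [intervalIntegral.integral_of_le hS0] at e1 e2
    simp only [intervalIntegral.integral_of_le hπ0] at e1 e2
    have hsub : (∫ s in Set.Ioc (0:ℝ) S, (∫ p in Set.Ioc (0:ℝ) π, σq p * bq p s) * μ s)
        = (∫ s in Set.Ioc (0:ℝ) S, (∫ p in Set.Ioc (0:ℝ) π, σq p * bq p s) * lam₁ s)
          - ∫ s in Set.Ioc (0:ℝ) S, (∫ p in Set.Ioc (0:ℝ) π, σq p * bq p s) * lam₂ s := by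
      rw [← integral_sub (marg π hπ0 hπS lam₁ hm₁ hi₁) (marg π hπ0 hπS lam₂ hm₂ hi₂)]
      congr 1; funext s; simp [hμdef]; ring
    rw [← swap π hπ0 hπS μ hμmeas hμIcc, hsub, e1, e2, sub_self]
  -- bound for bq on [-1,S+1] × [0,S]
  obtain ⟨C₂, hC₂⟩ := (isCompact_Icc.prod isCompact_Icc :
      IsCompact ((Set.Icc (-1:ℝ) (S+1)) ×ˢ (Set.Icc (0:ℝ) S))).exists_bound_of_continuousOn
      hbq.continuousOn
  have hμIoc : IntegrableOn μ (Set.Ioc 0 S) := hμIcc.mono_set Set.Ioc_subset_Icc_self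
  -- G is continuous at every point of [-1+ε, ...]: at every point of Ioo (-1) (S+1)
  have hGcont : ∀ p₀ ∈ Set.Ioo (-1:ℝ) (S+1), ContinuousAt G p₀ := by
    intro p₀ hp₀
    apply MeasureTheory.continuousAt_of_dominated (bound := fun s => C₂ * |μ s|)
    · filter_upwards with p
      exact ((hbq.comp (Continuous.prodMk_right p)).measurable.mul hμmeas).aestronglyMeasurable
    · filter_upwards [Ioo_mem_nhds hp₀.1 hp₀.2] with p hp
      refine (ae_restrict_iff' measurableSet_Ioc).2 (ae_of_all _ fun s hs => ?_)
      have hb : ‖bq p s‖ ≤ C₂ :=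
        hC₂ (p, s) ⟨⟨hp.1.le, hp.2.le⟩, Set.Ioc_subset_Icc_self hs⟩
      calc ‖bq p s * μ s‖ = ‖bq p s‖ * |μ s| := by rw [norm_mul, Real.norm_eq_abs (μ s)]
        _ ≤ C₂ * |μ s| := mul_le_mul_of_nonneg_right hb (abs_nonneg _)
    · exact hμIoc.abs.const_mul C₂
    · refine ae_of_all _ fun s => ?_
      exact (hbq.comp (continuous_id.prodMk continuous_const)).continuousAt.mul
        continuousAt_const
  have hIccsub : Set.Icc (0:ℝ) S ⊆ Set.Ioo (-1:ℝ) (S+1) := fun x hx =>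
    ⟨by linarith [hx.1], by linarith [hx.2]⟩
  -- g := σq * G, continuous on a neighborhood of [0,S]
  set g : ℝ → ℝ := fun p => σq p * G p with hgdef
  have hgcont : ∀ p₀ ∈ Set.Ioo (-1:ℝ) (S+1), ContinuousAt g p₀ := fun p₀ hp₀ =>
    hσq.continuousAt.mul (hGcont p₀ hp₀)
  have hgcontOn : ContinuousOn g (Set.Ioo (-1:ℝ) (S+1)) := fun x hx =>
    (hgcont x hx).continuousWithinAt
  -- F(u) = ∫ 0..u g = 0 on [0,S]
  have hF0 : ∀ u ∈ Set.Icc (0:ℝ) S, (∫ t in (0:ℝ)..u, g t) = 0 := by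
    intro u hu
    rw [intervalIntegral.integral_of_le hu.1]
    exact hzero u hu.1 hu.2
  -- g = 0 on Ioo 0 S via FTC
  have hg0 : ∀ p ∈ Set.Ioo (0:ℝ) S, g p = 0 := by
    intro p hp
    have hpmem : p ∈ Set.Ioo (-1:ℝ) (S+1) := hIccsub ⟨hp.1.le, hp.2.le⟩
    have hii : IntervalIntegrable g volume 0 p := by
      apply ContinuousOn.intervalIntegrable
      apply hgcontOn.mono
      rw [Set.uIcc_of_le hp.1.le]
      exact fun x hx => hIccsub ⟨hx.1, hx.2.trans hp.2.le⟩
    have hsm : StronglyMeasurableAtFilter g (nhds p) :=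
      ⟨Set.Ioo (-1:ℝ) (S+1), Ioo_mem_nhds hpmem.1 hpmem.2,
        hgcontOn.aestronglyMeasurable measurableSet_Ioo⟩
    have hftc : HasDerivAt (fun u => ∫ t in (0:ℝ)..u, g t) (g p) p :=
      intervalIntegral.integral_hasDerivAt_right hii hsm (hgcont p hpmem)
    have hconst : HasDerivAt (fun u => ∫ t in (0:ℝ)..u, g t) 0 p := by
      have : (fun u => ∫ t in (0:ℝ)..u, g t) =ᶠ[nhds p] fun _ => (0:ℝ) := by
        filter_upwards [Ioo_mem_nhds hp.1 hp.2] with u hu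
        exact hF0 u ⟨hu.1.le, hu.2.le⟩
      exact (hasDerivAt_const p (0:ℝ)).congr_of_eventuallyEq this
    exact hftc.unique hconst
  -- g = 0 on Icc 0 S by continuity
  have hg0' : ∀ p ∈ Set.Icc (0:ℝ) S, g p = 0 := by
    intro p hp
    have hcl : p ∈ closure (Set.Ioo (0:ℝ) S) := by
      rw [closure_Ioo hS.ne]; exact hp
    have hne : (nhdsWithin p (Set.Ioo (0:ℝ) S)).NeBot :=
      mem_closure_iff_nhdsWithin_neBot.1 hcl
    have htend : Filter.Tendsto g (nhdsWithin p (Set.Ioo (0:ℝ) S)) (nhds (g p)) :=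
      ((hgcont p (hIccsub hp)).tendsto).mono_left nhdsWithin_le_nhds
    have htend0 : Filter.Tendsto g (nhdsWithin p (Set.Ioo (0:ℝ) S)) (nhds 0) := by
      refine Filter.Tendsto.congr' ?_ tendsto_const_nhds
      filter_upwards [self_mem_nhdsWithin] with x hx
      exact (hg0 x hx).symm
    exact tendsto_nhds_unique htend htend0
  -- G = 0 on Ioc 0 S
  have hG0 : ∀ p ∈ Set.Ioc (0:ℝ) S, G p = 0 := by
    intro p hp
    have := hg0' p ⟨hp.1.le, hp.2⟩
    have hσ := hσpos p hp.1 hp.2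
    have : σq p * G p = 0 := this
    exact (mul_eq_zero.1 this).resolve_left hσ.ne'
  -- G 0 = 0 by continuity
  have hG00 : G 0 = 0 := by
    have hcl : (0:ℝ) ∈ closure (Set.Ioc (0:ℝ) S) := by
      rw [closure_Ioc hS.ne]; exact ⟨le_rfl, hS0⟩
    have hne : (nhdsWithin (0:ℝ) (Set.Ioc (0:ℝ) S)).NeBot :=
      mem_closure_iff_nhdsWithin_neBot.1 hcl
    have htend : Filter.Tendsto G (nhdsWithin (0:ℝ) (Set.Ioc (0:ℝ) S)) (nhds (G 0)) :=
      ((hGcont 0 (hIccsub ⟨le_rfl, hS0⟩)).tendsto).mono_left nhdsWithin_le_nhds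
    have htend0 : Filter.Tendsto G (nhdsWithin (0:ℝ) (Set.Ioc (0:ℝ) S)) (nhds 0) := by
      refine Filter.Tendsto.congr' ?_ tendsto_const_nhds
      filter_upwards [self_mem_nhdsWithin] with x hx
      exact (hG0 x hx).symm
    exact tendsto_nhds_unique htend htend0
  -- apply totality
  have hμ0 : μ =ᵐ[volume.restrict (Set.Icc (0:ℝ) S)] 0 := by
    refine htotal S hS le_rfl μ hμmeas hμIcc ?_
    intro p hp0 hpS
    rw [intervalIntegral.integral_of_le hS0]
    rcases eq_or_lt_of_le hp0 with h | h
    · rw [← h]; exact hG00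
    · exact hG0 p ⟨h, hpS⟩
  filter_upwards [hμ0] with s hs
  have : lam₁ s - lam₂ s = 0 := hs
  linarith
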